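/- Let $G$ be a graph constructed as follows: take the half-line $\mathbb{N}$, fix an increasing sequence $k_i = \sum_{j=1}^i n_j$ where $\{n_i\}$ are the vertex counts of a sequence of finite $d$-regular graphs $G_{n_i}$, and replace each edge $(k_i, k_i+1)$ of $\mathbb{N}$ by inserting the graph $G_{n_i}$ (connecting $k_i$ to a marked vertex $u_i^{(1)}$ and $k_{i+1}$ to a marked vertex $u_i^{(2)}$ of $G_{n_i}$). Then for each $i$, the function $\varphi_i$ equal to $1/\sqrt{n_i}$ on $V(G_{n_i})$ and $0$ elsewhere satisfies $\|A_G \varphi_i - d\,\varphi_i\|^2 = 2/n_i$, where $A_G$ is the adjacency operator of $G$. Consequently, since the $\varphi_i$ are pairwise orthogonal unit vectors and $n_i \to \infty$, $d \in \sigma_{\mathrm{ess}}(A_G)$. -/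

import Mathlib

open Filter

/-- The essential spectrum of a bounded operator: the spectrum with the isolated
eigenvalues of finite multiplicity removed. -/
def essSpectrum {E : Type*} [NormedAddCommGroup E] [NormedSpace ℂ E]
    (T : E →L[ℂ] E) : Set ℂ :=
  spectrum ℂ T \ {z | z ∉ closure (spectrum ℂ T \ {z}) ∧
    (∃ v : E, v ≠ 0 ∧ T v = z • v) ∧
    FiniteDimensional ℂ (LinearMap.ker ((T - z • (1 : E →L[ℂ] E) : E →L[ℂ] E) : E →ₗ[ℂ] E))}

/-!
Inside the `i`-th inserted copy the normalized indicator `φ i` is an eigenvector of the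
`d`-regular adjacency operator, except at the two half-line vertices `k i` and `k (i + 1)`, each of
which sees exactly one vertex of the copy. So `A φ i - d φ i` equals `1 / √(n i)` at those two
vertices and vanishes elsewhere, and the `φ i`, having disjoint supports, form an orthonormal Weyl
sequence for `d`.

Weyl's criterion for the self-adjoint operator `A` then puts `d` in the essential spectrum: if `d`
were an isolated eigenvalue of finite multiplicity, the continuous functional calculus would give
an inverse of `A - d` modulo its finite-dimensional kernel, forcing the `φ i` towards that kernel,
which Bessel's inequality forbids.
-/

open Topology

theorem continuousWithinAt_of_notMem_closure_sdiff_singleton {X Y : Type*} [TopologicalSpace X]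
    [TopologicalSpace Y] {s : Set X} {x : X} (hx : x ∉ closure (s \ {x})) (f : X → Y) :
    ContinuousWithinAt f s x :=
  continuousWithinAt_of_not_accPt <| by
    rwa [accPt_principal_iff_nhdsWithin, ← mem_closure_iff_nhdsWithin_neBot]

section Orthonormal

variable {𝕜 E : Type*} [RCLike 𝕜] [NormedAddCommGroup E] [InnerProductSpace 𝕜 E]
  {φ : ℕ → E}

theorem Orthonormal.tendsto_starProjection_zero (hφ : Orthonormal 𝕜 φ) (K : Submodule 𝕜 E)
    [FiniteDimensional 𝕜 K] : Tendsto (fun i => K.starProjection (φ i)) atTop (𝓝 0) := by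
  let b := stdOrthonormalBasis 𝕜 K
  have hinner (j) : Tendsto (fun i => inner 𝕜 (b j : E) (φ i)) atTop (𝓝 0) := by
    rw [tendsto_zero_iff_norm_tendsto_zero]
    simpa [norm_inner_symm] using
      (hφ.inner_products_summable (x := (b j : E))).tendsto_atTop_zero.sqrt
  simpa [b.starProjection_eq_sum_rankOne] using
    tendsto_finsetSum Finset.univ fun j _ => (hinner j).smul_const (b j : E)

theorem Orthonormal.not_tendsto_norm_sub_of_mem (hφ : Orthonormal 𝕜 φ) (K : Submodule 𝕜 E)
    [FiniteDimensional 𝕜 K] {y : ℕ → E} (hy : ∀ i, y i ∈ K) :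
    ¬Tendsto (fun i => ‖φ i - y i‖) atTop (𝓝 0) := by
  intro h
  have hle (i) : ‖φ i‖ ≤ ‖φ i - y i‖ + ‖K.starProjection (φ i)‖ :=
    calc ‖φ i‖ ≤ ‖φ i - K.starProjection (φ i)‖ + ‖K.starProjection (φ i)‖ :=
          norm_le_norm_sub_add _ _
      _ ≤ ‖φ i - y i‖ + ‖K.starProjection (φ i)‖ := by
          gcongr
          rw [K.starProjection_minimal]
          exact ciInf_le ⟨0, Set.forall_mem_range.mpr fun _ => norm_nonneg _⟩ (⟨y i, hy i⟩ : K)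
  have := squeeze_zero (fun _ => norm_nonneg _) hle
    (by simpa using h.add (hφ.tendsto_starProjection_zero K).norm)
  simp [hφ.1] at this

end Orthonormal

section Weyl

variable {E : Type*} [NormedAddCommGroup E] [InnerProductSpace ℂ E] [CompleteSpace E]

theorem exists_mem_ker_norm_sub_le_of_notMem_closure (A : E →L[ℂ] E) [IsStarNormal A] {z : ℂ}
    (hz : z ∉ closure (spectrum ℂ A \ {z})) :
    ∃ C : ℝ, ∀ x : E, ∃ v ∈ LinearMap.ker ((A - z • 1 : E →L[ℂ] E) : E →ₗ[ℂ] E),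
      ‖x - v‖ ≤ C * ‖A x - z • x‖ := by
  -- continuous on the spectrum because `z` is isolated in it, and `(w - z) * g w * (w - z) = w - z`
  let g : ℂ → ℂ := fun w => if w = z then 0 else (w - z)⁻¹
  have hg : ContinuousOn g (spectrum ℂ A) := by
    intro w _
    by_cases hwz : w = z
    · subst hwz
      exact continuousWithinAt_of_notMem_closure_sdiff_singleton hz g
    · refine (((continuousAt_id.sub continuousAt_const).inv₀ (sub_ne_zero.2 hwz)).congr
        ?_).continuousWithinAt
      filter_upwards [eventually_ne_nhds hwz] with y hy using (if_neg hy).symm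
  have hAz : cfc (fun w : ℂ => w - z) A = A - z • 1 := by
    rw [cfc_sub (fun w : ℂ => w) (fun _ => z) A, cfc_id' ℂ A, cfc_const z A,
      Algebra.algebraMap_eq_smul_one]
  have hgen : (A - z • 1) * cfc g A * (A - z • 1) = A - z • 1 := by
    rw [← hAz, ← cfc_mul _ _ A, ← cfc_mul _ _ A]
    congr 1
    funext w
    by_cases hwz : w = z
    · simp [hwz]
    · simp [g, hwz, sub_ne_zero.2 hwz]
  refine ⟨‖cfc g A‖, fun x => ⟨x - cfc g A ((A - z • 1) x), ?_, ?_⟩⟩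
  · have := congr($hgen x)
    simp only [mul_apply_eq_comp] at this
    rw [LinearMap.mem_ker, ContinuousLinearMap.coe_coe, map_sub, this, sub_self]
  · simpa using (cfc g A).le_opNorm ((A - z • 1) x)

theorem mem_essSpectrum_of_orthonormal (A : E →L[ℂ] E) [IsStarNormal A] {z : ℂ} {φ : ℕ → E}
    (hφ : Orthonormal ℂ φ) (h : Tendsto (fun i => ‖A (φ i) - z • φ i‖) atTop (𝓝 0)) :
    z ∈ essSpectrum A := by
  have key (hz : z ∉ closure (spectrum ℂ A \ {z}))
      (hfin : FiniteDimensional ℂ (LinearMap.ker ((A - z • 1 : E →L[ℂ] E) : E →ₗ[ℂ] E))) :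
      False := by
    obtain ⟨C, hC⟩ := exists_mem_ker_norm_sub_le_of_notMem_closure A hz
    choose y hyK hy using fun i => hC (φ i)
    exact hφ.not_tendsto_norm_sub_of_mem _ hyK <|
      squeeze_zero (fun _ => norm_nonneg _) hy (by simpa using h.const_mul C)
  refine ⟨?_, fun ⟨hz, _, hfin⟩ => key hz hfin⟩
  by_contra hzA
  refine key (fun hcl => hzA (closure_minimal Set.sdiff_subset (spectrum.isClosed A) hcl)) ?_
  have hinj : LinearMap.ker ((A - z • 1 : E →L[ℂ] E) : E →ₗ[ℂ] E) = ⊥ := by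
    have hunit : IsUnit (A - z • 1) := by
      simpa [Algebra.algebraMap_eq_smul_one] using (spectrum.notMem_iff.mp hzA).neg
    rw [LinearMap.ker_eq_bot]
    exact (ContinuousLinearEquiv.unitsEquiv ℂ E hunit.unit).injective
  rw [hinj]
  infer_instance

end Weyl

theorem SimpleGraph.tsum_neighborSet_eq_sum_of_eq_zero {V ι M : Type*} [Fintype ι]
    [AddCommMonoid M] [TopologicalSpace M] (G : SimpleGraph V) [DecidableRel G.Adj]
    {e : ι → V} (he : e.Injective) {ψ : V → M} (hψ : ∀ v ∉ Set.range e, ψ v = 0) (v : V) :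
    ∑' u : G.neighborSet v, ψ u = ∑ x, if G.Adj v (e x) then ψ (e x) else 0 := by
  rw [tsum_subtype, ← he.tsum_eq, tsum_fintype]
  · simp [Set.indicator_apply]
  · rw [Set.support_indicator]
    exact Set.inter_subset_right.trans (Function.support_subset_iff'.2 hψ)

theorem lp.norm_sq_eq_sum_of_eq_zero {V : Type*} {E : V → Type*} [∀ v, NormedAddCommGroup (E v)]
    (f : lp E 2) (s : Finset V) (hf : ∀ v ∉ s, f v = 0) : ‖f‖ ^ 2 = ∑ v ∈ s, ‖f v‖ ^ 2 := by
  have := lp.norm_rpow_eq_tsum (p := 2) (by norm_num) f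
  norm_num at this
  rw [this, tsum_eq_sum fun v hv => by simp [hf v hv]]

theorem apply_eq_card_adj_mul_of_eq_indicator {V ι : Type*} [Fintype ι] (G : SimpleGraph V)
    [DecidableRel G.Adj] {A : lp (fun _ : V => ℂ) 2 →L[ℂ] lp (fun _ : V => ℂ) 2}
    (hA : ∀ ψ v, A ψ v = ∑' u : G.neighborSet v, ψ u) {e : ι → V} (he : e.Injective)
    {ψ : lp (fun _ : V => ℂ) 2} {c : ℂ} (hψe : ∀ x, ψ (e x) = c)
    (hψ : ∀ v ∉ Set.range e, ψ v = 0) (v : V) :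
    A ψ v = (Finset.univ.filter fun x => G.Adj v (e x)).card * c := by
  rw [hA, G.tsum_neighborSet_eq_sum_of_eq_zero he hψ]
  simp [hψe, Finset.sum_ite]

section Adjacency

variable {V : Type*} (G : SimpleGraph V) {A : lp (fun _ : V => ℂ) 2 →L[ℂ] lp (fun _ : V => ℂ) 2}

theorem apply_single_of_apply_eq_tsum_neighborSet [DecidableEq V] [DecidableRel G.Adj]
    (hA : ∀ ψ v, A ψ v = ∑' u : G.neighborSet v, ψ u) (u : V) (c : ℂ) (v : V) :
    A (lp.single 2 u c) v = if G.Adj v u then c else 0 := by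
  rw [hA, G.tsum_neighborSet_eq_sum_of_eq_zero (e := fun _ : Unit => u) (fun _ _ _ => rfl)]
  · simp
  · intro w hw
    simp_all [lp.single_apply]

theorem isSelfAdjoint_of_apply_eq_tsum_neighborSet
    (hA : ∀ ψ v, A ψ v = ∑' u : G.neighborSet v, ψ u) : IsSelfAdjoint A := by
  classical
  rw [ContinuousLinearMap.isSelfAdjoint_iff_isSymmetric]
  intro ψ χ
  suffices innerSL ℂ (A ψ) = (innerSL ℂ ψ).comp A from congr($this χ)
  refine lp.ext_continuousLinearMap (by norm_num) fun u => ContinuousLinearMap.ext_ring ?_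
  simp only [ContinuousLinearMap.comp_apply, lp.singleContinuousLinearMap_apply,
    innerSL_apply_apply]
  rw [lp.inner_single_right, lp.inner_eq_tsum, hA, tsum_subtype]
  simp only [apply_single_of_apply_eq_tsum_neighborSet G hA, RCLike.inner_apply,
    Complex.conj_tsum, one_mul]
  refine tsum_congr fun v => ?_
  by_cases h : G.Adj u v <;> simp [G.adj_comm, h]

end Adjacency

theorem orthonormal_of_eq_inv_sqrt_card {n : ℕ → ℕ} (hn : ∀ i, 0 < n i)
    {φ : ℕ → lp (fun _ : ℕ ⊕ (Σ i, Fin (n i)) => ℂ) 2} (hφ1 : ∀ i a, φ i (.inl a) = 0)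
    (hφ2 : ∀ i j x, φ i (.inr ⟨j, x⟩) = if j = i then ((1 / Real.sqrt (n i) : ℝ) : ℂ) else 0) :
    Orthonormal ℂ φ := by
  refine ⟨fun i => ?_, fun i j hij => ?_⟩
  · have hemb : (fun x : Fin (n i) => (.inr ⟨i, x⟩ : ℕ ⊕ Σ i, Fin (n i))).Injective :=
      fun x y h => by simpa using h
    have hsq : ‖φ i‖ ^ 2 = 1 := by
      rw [lp.norm_sq_eq_sum_of_eq_zero _ (Finset.univ.map ⟨_, hemb⟩) ?_, Finset.sum_map]
      · simp [hφ2, (hn i).ne']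
      · rintro (a | ⟨j, x⟩) hv
        · exact hφ1 i a
        · have hj : j ≠ i := by rintro rfl; exact hv (by simp)
          simp [hφ2, hj]
    exact (pow_left_inj₀ (norm_nonneg _) zero_le_one two_ne_zero).1 (by simpa using hsq)
  · change inner ℂ (φ i) (φ j) = 0
    rw [lp.inner_eq_tsum]
    convert tsum_zero with v
    rcases v with a | ⟨m, x⟩
    · simp [hφ1]
    · by_cases hm : m = i <;> simp [hφ2, hm, hij]

section Block

variable {n : ℕ → ℕ} {G : SimpleGraph (ℕ ⊕ Σ i, Fin (n i))} {i : ℕ}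
  {A : lp (fun _ : ℕ ⊕ (Σ i, Fin (n i)) => ℂ) 2 →L[ℂ] lp (fun _ : ℕ ⊕ (Σ i, Fin (n i)) => ℂ) 2}
  {ψ : lp (fun _ : ℕ ⊕ (Σ i, Fin (n i)) => ℂ) 2} {c : ℂ}

theorem norm_apply_sub_smul_sq_of_block {H : SimpleGraph (Fin (n i))} [DecidableRel H.Adj]
    {d : ℕ} (hreg : ∀ x, H.degree x = d) {p q : ℕ} (hpq : p ≠ q) {x₁ x₂ : Fin (n i)}
    (hinl : ∀ a x, G.Adj (.inl a) (.inr ⟨i, x⟩) ↔ (a = p ∧ x = x₁) ∨ (a = q ∧ x = x₂))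
    (hinr : ∀ y x, G.Adj (.inr ⟨i, y⟩) (.inr ⟨i, x⟩) ↔ H.Adj y x)
    (hne : ∀ j, j ≠ i → ∀ y x, ¬G.Adj (.inr ⟨j, y⟩) (.inr ⟨i, x⟩))
    (hA : ∀ ψ v, A ψ v = ∑' u : G.neighborSet v, ψ u)
    (hψ1 : ∀ a, ψ (.inl a) = 0) (hψ2 : ∀ j x, ψ (.inr ⟨j, x⟩) = if j = i then c else 0) :
    ‖A ψ - (d : ℂ) • ψ‖ ^ 2 = 2 * ‖c‖ ^ 2 := by
  classical
  have hψ0 : ∀ v ∉ Set.range fun x : Fin (n i) => Sum.inr ⟨i, x⟩, ψ v = 0 := by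
    rintro (a | ⟨j, x⟩) hv
    · exact hψ1 a
    · have hj : j ≠ i := by rintro rfl; exact hv ⟨x, rfl⟩
      simp [hψ2, hj]
  have hblock := apply_eq_card_adj_mul_of_eq_indicator G hA (fun x y h => by simpa using h)
    (c := c) (by simp [hψ2]) hψ0
  have herr (v) : (A ψ - (d : ℂ) • ψ) v = if v = .inl p ∨ v = .inl q then c else 0 := by
    rw [lp.coeFn_sub, lp.coeFn_smul, Pi.sub_apply, Pi.smul_apply, smul_eq_mul, hblock]
    rcases v with a | ⟨j, y⟩
    · simp only [hinl, hψ1]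
      by_cases hp : a = p
      · simp [hp, hpq, Finset.filter_eq']
      · by_cases hq : a = q <;> simp [hp, hq, hpq.symm, Finset.filter_eq']
    · by_cases hj : j = i
      · subst hj
        have hcard : (Finset.univ.filter fun x => G.Adj (.inr ⟨j, y⟩) (.inr ⟨j, x⟩)).card = d := by
          rw [← hreg y, ← H.card_neighborFinset_eq_degree]
          congr 1
          ext x
          simp [hinr]
        simp [hcard, hψ2]
      · simp [hne j hj, hψ2, hj]
  rw [lp.norm_sq_eq_sum_of_eq_zero _ {.inl p, .inl q} fun v hv => by
      rw [herr, if_neg (by simpa using hv)], Finset.sum_pair (by simpa using hpq), herr, herr]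
  simp
  ring

end Block

theorem stmt12 (d : ℕ) (n : ℕ → ℕ) (hn : ∀ i, 0 < n i)
    (hninf : Tendsto n atTop atTop)
    (Gi : ∀ i, SimpleGraph (Fin (n i))) [∀ i, DecidableRel (Gi i).Adj]
    (hreg : ∀ i (x : Fin (n i)), (Gi i).degree x = d)
    (u1 u2 : ∀ i, Fin (n i))
    (k : ℕ → ℕ) (hk : ∀ i, k i = ∑ j ∈ Finset.range (i + 1), n j)
    (G : SimpleGraph (ℕ ⊕ (Σ i : ℕ, Fin (n i))))
    (hG : G = SimpleGraph.fromRel (fun p q =>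
      match p, q with
      | Sum.inl a, Sum.inl b => b = a + 1 ∧ ∀ i, a ≠ k i
      | Sum.inl a, Sum.inr ⟨i, x⟩ => (a = k i ∧ x = u1 i) ∨ (a = k (i + 1) ∧ x = u2 i)
      | Sum.inr ⟨i, x⟩, Sum.inr ⟨j, y⟩ => ∃ h : j = i, (Gi i).Adj x (h ▸ y)
      | _, _ => False))
    (A : lp (fun _ : ℕ ⊕ (Σ i : ℕ, Fin (n i)) => ℂ) 2 →L[ℂ]
         lp (fun _ : ℕ ⊕ (Σ i : ℕ, Fin (n i)) => ℂ) 2)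
    (hA : ∀ ψ (v : ℕ ⊕ (Σ i : ℕ, Fin (n i))),
      (A ψ : ∀ _ : ℕ ⊕ (Σ i : ℕ, Fin (n i)), ℂ) v =
        ∑' u : G.neighborSet v, (ψ : ∀ _ : ℕ ⊕ (Σ i : ℕ, Fin (n i)), ℂ) (u : ℕ ⊕ (Σ i : ℕ, Fin (n i))))
    (φ : ℕ → lp (fun _ : ℕ ⊕ (Σ i : ℕ, Fin (n i)) => ℂ) 2)
    (hφ1 : ∀ i a, (φ i : ∀ _ : ℕ ⊕ (Σ i : ℕ, Fin (n i)), ℂ) (Sum.inl a) = 0)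
    (hφ2 : ∀ i j (x : Fin (n j)), (φ i : ∀ _ : ℕ ⊕ (Σ i : ℕ, Fin (n i)), ℂ) (Sum.inr ⟨j, x⟩) =
      if j = i then ((1 / Real.sqrt (n i) : ℝ) : ℂ) else 0) :
    (∀ i, ‖A (φ i) - (d : ℂ) • φ i‖ ^ 2 = 2 / (n i : ℝ)) ∧
      (d : ℂ) ∈ essSpectrum A := by
  have hinl (i a : ℕ) (x : Fin (n i)) : G.Adj (.inl a) (.inr ⟨i, x⟩) ↔
      (a = k i ∧ x = u1 i) ∨ (a = k (i + 1) ∧ x = u2 i) := by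
    simp [hG]
  have hinr (i : ℕ) (y x : Fin (n i)) : G.Adj (.inr ⟨i, y⟩) (.inr ⟨i, x⟩) ↔ (Gi i).Adj y x := by
    simpa [hG, (Gi i).adj_comm x y] using fun h => h.ne
  have hne (i j : ℕ) (hj : j ≠ i) (y : Fin (n j)) (x : Fin (n i)) :
      ¬G.Adj (.inr ⟨j, y⟩) (.inr ⟨i, x⟩) := by
    simp [hG, hj, hj.symm]
  have hk_ne (i : ℕ) : k i ≠ k (i + 1) := by
    rw [hk, hk, Finset.sum_range_succ _ (i + 1)]
    have := hn (i + 1)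
    omega
  have hnorm (i : ℕ) : ‖A (φ i) - (d : ℂ) • φ i‖ ^ 2 = 2 / (n i : ℝ) := by
    rw [norm_apply_sub_smul_sq_of_block (hreg i) (hk_ne i) (hinl i) (hinr i) (hne i) hA (hφ1 i)
      (hφ2 i)]
    simp [div_eq_mul_inv]
  refine ⟨hnorm, ?_⟩
  have := (isSelfAdjoint_of_apply_eq_tsum_neighborSet _ hA).isStarNormal
  refine mem_essSpectrum_of_orthonormal A (orthonormal_of_eq_inv_sqrt_card hn hφ1 hφ2) ?_
  have hsqrt : Tendsto (fun i => Real.sqrt (2 / (n i : ℝ))) atTop (𝓝 0) := by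
    simpa using ((tendsto_natCast_atTop_atTop.comp hninf).const_div_atTop 2).sqrt
  refine hsqrt.congr fun i => ?_
  rw [← hnorm, Real.sqrt_sq (norm_nonneg _)]
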